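/- arXiv:1106.4072 — 4 statements merged into one kernel-verified Lean document; each statement's English description precedes it below -/
import Mathlib

section
/- Let M be a compact metric space with Borel probability measure m, f : M → M Borel measurable, and 0 < α ≤ 1. Then there exists a minimal α-observable statistical attractor: a nonempty compact f-invariant set K with m(B(K)) ≥ α such that no proper nonempty compact f-invariant subset K' ⊊ K satisfies m(B(K')) ≥ α. -/
/-!
The α-observable statistical attractors form a nonempty family (it contains `univ`) that is closed
under intersections of chains, so Zorn's lemma gives a minimal one. For a chain `c` with
intersection `K`, compactness puts members of `c` into every thickening of `K`; a point attracted
to members lying in thinner and thinner thickenings is attracted to `K`, so the basin of `K`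
contains a countable intersection of basins of members of `c`, a directed family of sets of
measure `≥ α`.
-/

open MeasureTheory Filter Metric Set
open scoped Classical ENNReal Topology

/-- Frequency of visits, up to time `n - 1`, of the orbit of `x` to the
`ε`-neighborhood of `K`: `(1/n) · #{0 ≤ j ≤ n−1 : dist(f^j(x), K) < ε}`. -/
noncomputable def visitFreq {M : Type*} [MetricSpace M] (f : M → M) (K : Set M) (ε : ℝ)
    (x : M) (n : ℕ) : ℝ :=
  (((Finset.range n).filter (fun j => infDist (f^[j] x) K < ε)).card : ℝ) / n

/-- Basin of statistical attraction of `K`. -/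
def statBasin {M : Type*} [MetricSpace M] (f : M → M) (K : Set M) : Set M :=
  {x | ∀ ε > 0, Tendsto (fun n => visitFreq f K ε x n) atTop (𝓝 1)}

/-- The auxiliary basin `B_ε(K) = {x : liminf_n (1/n)·#{j < n : dist(f^j(x),K) < ε} > 1 − ε}`. -/
def statBasinEps {M : Type*} [MetricSpace M] (f : M → M) (K : Set M) (ε : ℝ) : Set M :=
  {x | 1 - ε < atTop.liminf (fun n => visitFreq f K ε x n)}

section

variable {M : Type*} [MetricSpace M]

section VisitFreq

variable {f : M → M} {K K' : Set M} {ε ε' : ℝ} {x : M}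

lemma visitFreq_le_one (f : M → M) (K : Set M) (ε : ℝ) (x : M) (n : ℕ) :
    visitFreq f K ε x n ≤ 1 := by
  unfold visitFreq
  rcases Nat.eq_zero_or_pos n with rfl | hn
  · simp
  · rw [div_le_one (by exact_mod_cast hn)]
    exact_mod_cast (Finset.card_filter_le _ _).trans (by simp)

lemma visitFreq_mono (h : ∀ y, infDist y K < ε → infDist y K' < ε') (n : ℕ) :
    visitFreq f K ε x n ≤ visitFreq f K' ε' x n := by
  unfold visitFreq
  gcongr ?_ / _
  exact_mod_cast Finset.card_le_card (Finset.monotone_filter_right _ fun _ _ => h _)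

lemma tendsto_visitFreq_one_of_imp (h : ∀ y, infDist y K < ε → infDist y K' < ε')
    (hK : Tendsto (visitFreq f K ε x) atTop (𝓝 1)) :
    Tendsto (visitFreq f K' ε' x) atTop (𝓝 1) :=
  tendsto_of_tendsto_of_tendsto_of_le_of_le hK tendsto_const_nhds
    (fun n => visitFreq_mono h n) (fun n => visitFreq_le_one f K' ε' x n)

lemma measurable_visitFreq [MeasurableSpace M] [BorelSpace M] (hf : Measurable f)
    (K : Set M) (ε : ℝ) (n : ℕ) : Measurable fun x => visitFreq f K ε x n := by
  unfold visitFreq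
  simp_rw [Finset.natCast_card_filter]
  refine Measurable.div_const (Finset.measurable_sum _ fun j _ => ?_) _
  exact Measurable.ite (measurableSet_lt ((continuous_infDist_pt K).measurable.comp
    (hf.iterate j)) measurable_const) measurable_const measurable_const

end VisitFreq

section StatBasin

variable {f : M → M} {K K' : Set M}

lemma statBasin_univ (f : M → M) : statBasin f univ = univ := by
  refine eq_univ_of_forall fun x ε hε => tendsto_const_nhds.congr' ?_
  filter_upwards [eventually_ge_atTop 1] with n hn
  have hall : (Finset.range n).filter (fun j => infDist (f^[j] x) univ < ε) = Finset.range n :=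
    Finset.filter_true_of_mem fun j _ => by rwa [infDist_zero_of_mem (mem_univ _)]
  rw [visitFreq, hall, Finset.card_range, div_self (by positivity)]

lemma statBasin_mono (hK : K.Nonempty) (hKK' : K ⊆ K') : statBasin f K ⊆ statBasin f K' :=
  fun _ hx ε hε => tendsto_visitFreq_one_of_imp
    (fun _ hy => (infDist_le_infDist_of_subset hKK' hK).trans_lt hy) (hx ε hε)

lemma measurableSet_statBasin [MeasurableSpace M] [BorelSpace M] (hf : Measurable f)
    (K : Set M) : MeasurableSet (statBasin f K) := by
  have hBasin : statBasin f K =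
      ⋂ k : ℕ, {x | Tendsto (visitFreq f K (1 / (k + 1)) x) atTop (𝓝 1)} := by
    ext x
    simp only [statBasin, mem_ofPred_eq, mem_iInter]
    refine ⟨fun h k => h _ Nat.one_div_pos_of_nat, fun h ε hε => ?_⟩
    obtain ⟨k, hk⟩ := exists_nat_one_div_lt hε
    exact tendsto_visitFreq_one_of_imp (fun _ hy => hy.trans hk) (h k)
  rw [hBasin]
  exact .iInter fun k => measurableSet_tendsto _ fun n => measurable_visitFreq hf K _ n

lemma infDist_lt_add_of_subset_thickening {T : Set M} {y : M} {ε δ : ℝ} (hT : T.Nonempty)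
    (hTK : T ⊆ thickening δ K) (hy : infDist y T < ε) : infDist y K < ε + δ := by
  obtain ⟨z, hzT, hyz⟩ := (infDist_lt_iff hT).mp hy
  obtain ⟨w, hwK, hzw⟩ := mem_thickening_iff.mp (hTK hzT)
  calc infDist y K ≤ dist y w := infDist_le_dist_of_mem hwK
    _ ≤ dist y z + dist z w := dist_triangle _ _ _
    _ < ε + δ := add_lt_add hyz hzw

lemma iInter_statBasin_subset {ι : Type*} {T : ι → Set M} (hT : ∀ i, (T i).Nonempty)
    (hTK : ∀ δ > 0, ∃ i, T i ⊆ thickening δ K) :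
    ⋂ i, statBasin f (T i) ⊆ statBasin f K := by
  intro x hx ε hε
  obtain ⟨i, hi⟩ := hTK (ε / 2) (half_pos hε)
  refine tendsto_visitFreq_one_of_imp (fun y hy => ?_) (mem_iInter.mp hx i (ε / 2) (half_pos hε))
  simpa using infDist_lt_add_of_subset_thickening (hT i) hi hy

end StatBasin

lemma IsChain.directedOn_superset {α : Type*} {c : Set (Set α)} (hchain : IsChain (· ⊆ ·) c) :
    DirectedOn (· ⊇ ·) c := fun s hs t ht =>
  (hchain.total hs ht).elim (fun h => ⟨s, hs, subset_rfl, h⟩) (fun h => ⟨t, ht, h, subset_rfl⟩)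

lemma IsChain.exists_subset_thickening_sInter {c : Set (Set M)} (hchain : IsChain (· ⊆ ·) c)
    (hc : c.Nonempty) (hcomp : ∀ t ∈ c, IsCompact t) {δ : ℝ} (hδ : 0 < δ) :
    ∃ t ∈ c, t ⊆ thickening δ (⋂₀ c) := by
  have := hc.to_subtype
  obtain ⟨t, ht⟩ := exists_subset_nhds_of_isCompact (U := thickening δ (⋂₀ c))
    hchain.directedOn_superset.directed_val
    (fun t => hcomp t t.2) fun x hx =>
      isOpen_thickening.mem_nhds (self_subset_thickening hδ _ (by rwa [sInter_eq_iInter]))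
  exact ⟨t, t.2, ht⟩

lemma IsChain.exists_iInter_statBasin_subset {f : M → M} {c : Set (Set M)}
    (hchain : IsChain (· ⊆ ·) c) (hc : c.Nonempty) (hne : ∀ t ∈ c, t.Nonempty)
    (hcomp : ∀ t ∈ c, IsCompact t) :
    ∃ T : ℕ → Set M, (∀ k, T k ∈ c) ∧ ⋂ k, statBasin f (T k) ⊆ statBasin f (⋂₀ c) := by
  choose T hTc hTK using fun k : ℕ =>
    hchain.exists_subset_thickening_sInter hc hcomp (Nat.one_div_pos_of_nat (n := k))
  refine ⟨T, hTc, iInter_statBasin_subset (fun k => hne _ (hTc k)) fun δ hδ => ?_⟩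
  obtain ⟨k, hk⟩ := exists_nat_one_div_lt hδ
  exact ⟨k, (hTK k).trans (thickening_mono hk.le _)⟩

def IsObsStatAttractor [MeasurableSpace M] (m : Measure M) (f : M → M) (α : ℝ) (K : Set M) :
    Prop :=
  K.Nonempty ∧ IsCompact K ∧ f ⁻¹' K = K ∧ ENNReal.ofReal α ≤ m (statBasin f K)

namespace IsObsStatAttractor

variable [MeasurableSpace M] {m : Measure M} {f : M → M} {α : ℝ}

lemma univ [CompactSpace M] [IsProbabilityMeasure m] (hα1 : α ≤ 1) :
    IsObsStatAttractor m f α Set.univ := by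
  have := nonempty_of_isProbabilityMeasure m
  refine ⟨univ_nonempty, isCompact_univ, preimage_univ, ?_⟩
  rw [statBasin_univ, measure_univ]
  exact ENNReal.ofReal_le_one.mpr hα1

lemma sInter_of_isChain [BorelSpace M] [IsFiniteMeasure m] (hf : Measurable f)
    {c : Set (Set M)} (hcS : ∀ K ∈ c, IsObsStatAttractor m f α K) (hchain : IsChain (· ⊆ ·) c)
    (hc : c.Nonempty) : IsObsStatAttractor m f α (⋂₀ c) := by
  have hne : ∀ t ∈ c, t.Nonempty := fun t ht => (hcS t ht).1
  have hcomp : ∀ t ∈ c, IsCompact t := fun t ht => (hcS t ht).2.1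
  have := hc.to_subtype
  have hKne : (⋂₀ c).Nonempty :=
    IsCompact.nonempty_sInter_of_directed_nonempty_isCompact_isClosed hchain.directedOn_superset
      hne hcomp fun t ht => (hcomp t ht).isClosed
  obtain ⟨t₀, ht₀⟩ := hc
  have hKcomp : IsCompact (⋂₀ c) := (hcomp t₀ ht₀).of_isClosed_subset
    (isClosed_sInter fun t ht => (hcomp t ht).isClosed) (sInter_subset_of_mem ht₀)
  have hKinv : f ⁻¹' ⋂₀ c = ⋂₀ c := by
    rw [sInter_eq_biInter, preimage_iInter₂]
    exact iInter₂_congr fun t ht => (hcS t ht).2.2.1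
  obtain ⟨T, hTc, hBasin⟩ := hchain.exists_iInter_statBasin_subset (f := f) ⟨t₀, ht₀⟩ hne hcomp
  have hdir : Directed (· ⊇ ·) fun k => statBasin f (T k) := fun i j =>
    (hchain.total (hTc i) (hTc j)).elim
      (fun h => ⟨i, le_rfl, statBasin_mono (hne _ (hTc i)) h⟩)
      (fun h => ⟨j, statBasin_mono (hne _ (hTc j)) h, le_rfl⟩)
  refine ⟨hKne, hKcomp, hKinv, ?_⟩
  calc ENNReal.ofReal α ≤ ⨅ k, m (statBasin f (T k)) := le_iInf fun k => (hcS _ (hTc k)).2.2.2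
    _ = m (⋂ k, statBasin f (T k)) :=
      (hdir.measure_iInter (fun k => (measurableSet_statBasin hf _).nullMeasurableSet)
        ⟨0, measure_ne_top m _⟩).symm
    _ ≤ m (statBasin f (⋂₀ c)) := measure_mono hBasin

end IsObsStatAttractor

end

theorem exists_minimal_alpha_obs_statAttractor_general {M : Type*} [MetricSpace M] [CompactSpace M]
    [MeasurableSpace M] [BorelSpace M] (m : Measure M) [IsProbabilityMeasure m]
    (f : M → M) (hf : Measurable f) (α : ℝ) (hα1 : α ≤ 1) :
    ∃ K : Set M, K.Nonempty ∧ IsCompact K ∧ f ⁻¹' K = K ∧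
      ENNReal.ofReal α ≤ m (statBasin f K) ∧
      ∀ K' : Set M, K' ⊆ K → K' ≠ K → K'.Nonempty → IsCompact K' → f ⁻¹' K' = K' →
        ¬ ENNReal.ofReal α ≤ m (statBasin f K') := by
  obtain ⟨K, -, hKmin⟩ := zorn_superset_nonempty {K | IsObsStatAttractor m f α K}
    (fun c hcS hchain hc => ⟨⋂₀ c, .sInter_of_isChain hf hcS hchain hc,
      fun _ => sInter_subset_of_mem⟩) Set.univ (.univ hα1)
  obtain ⟨hKne, hKcomp, hKinv, hKα⟩ := hKmin.prop
  refine ⟨K, hKne, hKcomp, hKinv, hKα, fun K' hK'K hK'K_ne hK'ne hK'comp hK'inv hK'α => ?_⟩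
  exact hK'K_ne (hK'K.antisymm (hKmin.2 ⟨hK'ne, hK'comp, hK'inv, hK'α⟩ hK'K))

/-- existence of a minimal `α`-observable statistical attractor: a nonempty
compact `f`-invariant set `K` with `m(B(K)) ≥ α`, no proper nonempty compact
`f`-invariant subset of which has basin of measure `≥ α`. -/
theorem exists_minimal_alpha_obs_statAttractor {M : Type*} [MetricSpace M] [CompactSpace M]
    [MeasurableSpace M] [BorelSpace M] (m : Measure M) [IsProbabilityMeasure m]
    (f : M → M) (hf : Measurable f) (α : ℝ) (hα : 0 < α) (hα1 : α ≤ 1) :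
    ∃ K : Set M, K.Nonempty ∧ IsCompact K ∧ f ⁻¹' K = K ∧
      ENNReal.ofReal α ≤ m (statBasin f K) ∧
      ∀ K' : Set M, K' ⊆ K → K' ≠ K → K'.Nonempty → IsCompact K' → f ⁻¹' K' = K' →
        ¬ ENNReal.ofReal α ≤ m (statBasin f K') :=
  exists_minimal_alpha_obs_statAttractor_general m f hf α hα1
end

section
/- Let M be a compact metric space with Borel probability measure m, f : M → M Borel measurable, and B ⊆ M a Borel set with B ⊆ f⁻¹(B) and m(B) > 0. Then the set O_{f|B} of SRB-like measures for f restricted to B is nonempty and weak*-compact. -/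
/-!
Being SRB-like depends only on the weak* topology: `μ` is SRB-like iff every neighbourhood of `μ`
meets `L*(x)` for a set of `x ∈ B` of positive measure. Such `μ` form a closed, hence compact,
subset of the compact space of probability measures. If there were none, every `μ` would have a
neighbourhood met by `L*(x)` only for `x` in a null set; finitely many of these neighbourhoods
cover the space, and since every `L*(x)` is nonempty the corresponding null sets cover `B`.
-/

open MeasureTheory Filter Metric Set
open scoped Classical ENNReal Topology NNReal

/-- The empirical probability measure `ν_{n+1}(x) = (1/(n+1)) ∑_{j=0}^{n} δ_{f^j(x)}`. -/
noncomputable def emp {M : Type*} [MeasurableSpace M] (f : M → M) (x : M) (n : ℕ) :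
    ProbabilityMeasure M :=
  ⟨((n + 1 : ℝ≥0∞))⁻¹ • ∑ j ∈ Finset.range (n + 1), Measure.dirac (f^[j] x), by
    constructor
    simp [Measure.smul_apply, Measure.finset_sum_apply]
    exact ENNReal.inv_mul_cancel (by simp) (by simp)⟩

/-- The limit set `L*(x)`: all weak* limits of convergent subsequences of `ν_n(x)`. -/
def Lstar {M : Type*} [MetricSpace M] [MeasurableSpace M] [OpensMeasurableSpace M]
    (f : M → M) (x : M) : Set (ProbabilityMeasure M) :=
  {μ | ∃ φ : ℕ → ℕ, StrictMono φ ∧ Tendsto (fun i => emp f x (φ i)) atTop (𝓝 μ)}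

/-- `d` is a metric on the space of Borel probability measures inducing the weak* topology. -/
def IsWeakStarMetric {M : Type*} [MetricSpace M] [MeasurableSpace M] [OpensMeasurableSpace M]
    (d : ProbabilityMeasure M → ProbabilityMeasure M → ℝ) : Prop :=
  (∀ μ ν, 0 ≤ d μ ν) ∧ (∀ μ ν, d μ ν = d ν μ) ∧ (∀ μ ν, d μ ν = 0 ↔ μ = ν) ∧
    (∀ μ ν ρ, d μ ρ ≤ d μ ν + d ν ρ) ∧
    (∀ (μ : ProbabilityMeasure M) (s : Set (ProbabilityMeasure M)),
      s ∈ 𝓝 μ ↔ ∃ ε > 0, {ν | d ν μ < ε} ⊆ s)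

/-- `μ` is SRB-like (physical-like) for `f` restricted to `B`: for every `ε > 0` the basin of
`ε`-weak statistical attraction `{x ∈ B : dist*(L*(x), μ) < ε}` has positive `m`-measure. -/
def SRBlike {M : Type*} [MetricSpace M] [MeasurableSpace M] [OpensMeasurableSpace M]
    (m : Measure M) (f : M → M) (B : Set M)
    (d : ProbabilityMeasure M → ProbabilityMeasure M → ℝ) (μ : ProbabilityMeasure M) : Prop :=
  ∀ ε > 0, 0 < m {x | x ∈ B ∧ ∃ ν ∈ Lstar f x, d ν μ < ε}

section EssentialLimitPoints

variable {X α : Type*} [TopologicalSpace X] [MeasurableSpace α] (m : Measure α) (B : Set α)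
  (L : α → Set X)

def essLimitPoints : Set X :=
  {μ | ∀ U ∈ 𝓝 μ, 0 < m {x | x ∈ B ∧ ∃ ν ∈ L x, ν ∈ U}}

theorem isClosed_essLimitPoints : IsClosed (essLimitPoints m B L) := by
  refine isClosed_of_closure_subset fun μ hμ U hU => ?_
  obtain ⟨V, hVU, hVopen, hμV⟩ := mem_nhds_iff.1 hU
  obtain ⟨μ', hμ'V, hμ'⟩ := mem_closure_iff.1 hμ V hVopen hμV
  exact (hμ' V (hVopen.mem_nhds hμ'V)).trans_le <|
    measure_mono fun x ⟨hxB, ν, hνL, hνV⟩ => ⟨hxB, ν, hνL, hVU hνV⟩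

theorem essLimitPoints_nonempty [CompactSpace X] (hL : ∀ x ∈ B, (L x).Nonempty)
    (hB : m B ≠ 0) : (essLimitPoints m B L).Nonempty := by
  by_contra hempty
  have hnull : ∀ μ : X, ∃ U ∈ 𝓝 μ, m {x | x ∈ B ∧ ∃ ν ∈ L x, ν ∈ U} = 0 := fun μ => by
    have hμ : μ ∉ essLimitPoints m B L := fun hμ => hempty ⟨μ, hμ⟩
    simpa [essLimitPoints, pos_iff_ne_zero] using hμ
  choose U hU hUnull using hnull
  obtain ⟨t, -, hcover⟩ := isCompact_univ.elim_nhds_subcover U fun μ _ => hU μ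
  have hBsub : B ⊆ ⋃ μ ∈ t, {x | x ∈ B ∧ ∃ ν ∈ L x, ν ∈ U μ} := fun x hx => by
    obtain ⟨ν, hν⟩ := hL x hx
    obtain ⟨μ, hμt, hνU⟩ := mem_iUnion₂.1 (hcover (mem_univ ν))
    exact mem_iUnion₂.2 ⟨μ, hμt, hx, ν, hν, hνU⟩
  exact hB (measure_mono_null hBsub ((measure_biUnion_null_iff t.countable_toSet).2
    fun μ _ => hUnull μ))

end EssentialLimitPoints

theorem Lstar_nonempty {M : Type*} [MetricSpace M] [CompactSpace M] [MeasurableSpace M]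
    [BorelSpace M] (f : M → M) (x : M) : (Lstar f x).Nonempty :=
  let ⟨μ, φ, hφ, hlim⟩ := CompactSpace.tendsto_subseq (emp f x)
  ⟨μ, φ, hφ, hlim⟩

theorem setOf_SRBlike_eq_essLimitPoints {M : Type*} [MetricSpace M] [MeasurableSpace M]
    [OpensMeasurableSpace M] (m : Measure M) (f : M → M) (B : Set M)
    {d : ProbabilityMeasure M → ProbabilityMeasure M → ℝ} (hd : IsWeakStarMetric d) :
    {μ | SRBlike m f B d μ} = essLimitPoints m B (Lstar f) := by
  have hnhds := hd.2.2.2.2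
  ext μ
  constructor
  · intro hμ U hU
    obtain ⟨ε, hε, hball⟩ := (hnhds μ U).1 hU
    exact (hμ ε hε).trans_le <| measure_mono fun x ⟨hxB, ν, hνL, hνμ⟩ =>
      ⟨hxB, ν, hνL, hball hνμ⟩
  · intro hμ ε hε
    exact hμ _ ((hnhds μ _).2 ⟨ε, hε, subset_rfl⟩)

theorem srbLike_nonempty_isCompact_general {M : Type*} [MetricSpace M] [CompactSpace M]
    [MeasurableSpace M] [BorelSpace M] (m : Measure M)
    (f : M → M) (B : Set M)
    (hBm : 0 < m B)
    (d : ProbabilityMeasure M → ProbabilityMeasure M → ℝ) (hd : IsWeakStarMetric d) :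
    {μ : ProbabilityMeasure M | SRBlike m f B d μ}.Nonempty ∧
      IsCompact {μ : ProbabilityMeasure M | SRBlike m f B d μ} := by
  rw [setOf_SRBlike_eq_essLimitPoints m f B hd]
  exact ⟨essLimitPoints_nonempty m B _ (fun x _ => Lstar_nonempty f x) hBm.ne',
    (isClosed_essLimitPoints m B _).isCompact⟩

/-- the set of SRB-like measures for `f|_B` is nonempty and weak*-compact. -/
theorem srbLike_nonempty_isCompact {M : Type*} [MetricSpace M] [CompactSpace M]
    [MeasurableSpace M] [BorelSpace M] (m : Measure M) [IsProbabilityMeasure m]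
    (f : M → M) (hf : Measurable f) (B : Set M) (hB : MeasurableSet B)
    (hBinv : B ⊆ f ⁻¹' B) (hBm : 0 < m B)
    (d : ProbabilityMeasure M → ProbabilityMeasure M → ℝ) (hd : IsWeakStarMetric d) :
    {μ : ProbabilityMeasure M | SRBlike m f B d μ}.Nonempty ∧
      IsCompact {μ : ProbabilityMeasure M | SRBlike m f B d μ} :=
  srbLike_nonempty_isCompact_general m f B hBm d hd
end

section
/- Let M be a compact metric space with Borel probability measure m, f : M → M Borel measurable, and B ⊆ M Borel with B ⊆ f⁻¹(B) and m(B) > 0. Then for m-almost every x ∈ B, the limit set L*(x) of empirical measures is contained in the set O_{f|B} of SRB-like measures for f|_B. -/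
open MeasureTheory Filter Metric Set
open scoped Classical ENNReal Topology NNReal

/-!
A measure that is not SRB-like has a weak* neighbourhood `U` such that almost no point of `B`
has a limit measure in `U`. On a compact metric space the probability measures form a compact
metrizable, hence second countable, space, so countably many such neighbourhoods cover all
non-SRB-like measures, and the union of the corresponding null sets is still null.
-/

theorem ae_forall_mem_nhds_measure_pos {α X : Type*} [MeasurableSpace α] [TopologicalSpace X]
    [SecondCountableTopology X] (m : Measure α) (L : α → Set X) :
    ∀ᵐ x ∂m, ∀ ν ∈ L x, ∀ U ∈ 𝓝 ν, 0 < m {y | (L y ∩ U).Nonempty} := by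
  set N : Set X := {μ | ∃ U ∈ 𝓝 μ, m {y | (L y ∩ U).Nonempty} = 0}
  have hnull : ∀ μ ∈ N, ∃ U ∈ 𝓝 μ, m {y | (L y ∩ U).Nonempty} = 0 := fun _ h => h
  choose! U hU hUnull using hnull
  obtain ⟨T, hTN, hTc, hTcov⟩ :=
    TopologicalSpace.countable_cover_nhdsWithin fun μ hμ => nhdsWithin_le_nhds (hU μ hμ)
  have hE : m (⋃ μ ∈ T, {y | (L y ∩ U μ).Nonempty}) = 0 :=
    (measure_biUnion_null_iff hTc).mpr fun μ hμ => hUnull μ (hTN hμ)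
  filter_upwards [measure_eq_zero_iff_ae_notMem.mp hE] with x hx ν hν V hV
  refine pos_iff_ne_zero.mpr fun hV0 => ?_
  obtain ⟨μ, hμT, hνμ⟩ := mem_iUnion₂.mp (hTcov (show ν ∈ N from ⟨V, hV, hV0⟩))
  exact hx (mem_iUnion₂.mpr ⟨μ, hμT, ν, hν, hνμ⟩)

theorem srbLike_of_forall_nhds {M : Type*} [MetricSpace M] [MeasurableSpace M]
    [OpensMeasurableSpace M] {m : Measure M} {f : M → M} {B : Set M}
    {d : ProbabilityMeasure M → ProbabilityMeasure M → ℝ} (hd : IsWeakStarMetric d)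
    {μ : ProbabilityMeasure M}
    (h : ∀ U ∈ 𝓝 μ, 0 < m {x | x ∈ B ∧ ∃ ν ∈ Lstar f x, ν ∈ U}) :
    SRBlike m f B d μ := fun ε hε =>
  h _ ((hd.2.2.2.2 μ _).mpr ⟨ε, hε, subset_rfl⟩)

theorem Lstar_subset_srbLike_ae_general {M : Type*} [MetricSpace M] [CompactSpace M]
    [MeasurableSpace M] [BorelSpace M] (m : Measure M)
    (f : M → M) (B : Set M)
    (d : ProbabilityMeasure M → ProbabilityMeasure M → ℝ) (hd : IsWeakStarMetric d) :
    ∀ᵐ x ∂m, x ∈ B → Lstar f x ⊆ {μ : ProbabilityMeasure M | SRBlike m f B d μ} := by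
  -- Compact (Prokhorov) and metrizable (Lévy–Prokhorov), hence second countable.
  let := TopologicalSpace.metrizableSpaceMetric (ProbabilityMeasure M)
  filter_upwards [ae_forall_mem_nhds_measure_pos m fun x => {ν ∈ Lstar f x | x ∈ B}]
    with x hx hxB ν hν
  refine srbLike_of_forall_nhds hd fun U hU => (hx ν ⟨hν, hxB⟩ U hU).trans_le ?_
  exact measure_mono fun y ⟨ρ, ⟨hρ, hyB⟩, hρU⟩ => ⟨hyB, ρ, hρ, hρU⟩

/-- for `m`-almost every `x ∈ B`, the limit set `L*(x)` is contained in the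
set of SRB-like measures for `f|_B`. -/
theorem Lstar_subset_srbLike_ae {M : Type*} [MetricSpace M] [CompactSpace M]
    [MeasurableSpace M] [BorelSpace M] (m : Measure M) [IsProbabilityMeasure m]
    (f : M → M) (hf : Measurable f) (B : Set M) (hB : MeasurableSet B)
    (hBinv : B ⊆ f ⁻¹' B) (hBm : 0 < m B)
    (d : ProbabilityMeasure M → ProbabilityMeasure M → ℝ) (hd : IsWeakStarMetric d) :
    ∀ᵐ x ∂m, x ∈ B → Lstar f x ⊆ {μ : ProbabilityMeasure M | SRBlike m f B d μ} :=
  Lstar_subset_srbLike_ae_general m f B d hd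
end

section
/- Let M be a compact metric space with Borel probability measure m, f : M → M Borel measurable, and B ⊆ M Borel with B ⊆ f⁻¹(B) and m(B) > 0. Then O_{f|B} is the minimal nonempty weak*-compact set of probability measures containing L*(x) for m-almost every x ∈ B: if K is any nonempty weak*-compact proper subset of O_{f|B}, then the set of x ∈ B with L*(x) ⊄ K has positive m-measure. -/
open MeasureTheory Filter Metric Set
open scoped Classical ENNReal Topology NNReal

/-- the set of SRB-like measures is the minimal nonempty weak*-compact set
containing `L*(x)` for `m`-a.e. `x ∈ B`: any nonempty compact proper subset misses `L*(x)`
on a set of positive measure. -/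
theorem srbLike_minimal {M : Type*} [MetricSpace M] [CompactSpace M]
    [MeasurableSpace M] [BorelSpace M] (m : Measure M) [IsProbabilityMeasure m]
    (f : M → M) (hf : Measurable f) (B : Set M) (hB : MeasurableSet B)
    (hBinv : B ⊆ f ⁻¹' B) (hBm : 0 < m B)
    (d : ProbabilityMeasure M → ProbabilityMeasure M → ℝ) (hd : IsWeakStarMetric d)
    (K : Set (ProbabilityMeasure M)) (hKne : K.Nonempty) (hKc : IsCompact K)
    (hKsub : K ⊆ {μ : ProbabilityMeasure M | SRBlike m f B d μ})
    (hKproper : K ≠ {μ : ProbabilityMeasure M | SRBlike m f B d μ}) :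
    0 < m {x | x ∈ B ∧ ¬ Lstar f x ⊆ K} := by
  obtain ⟨d0, dsymm, deq, dtri, dnhds⟩ := hd
  -- pick an SRB-like measure μ outside K
  obtain ⟨μ, hμO, hμK⟩ : ∃ μ, SRBlike m f B d μ ∧ μ ∉ K := by
    by_contra h
    push_neg at h
    exact hKproper (Set.Subset.antisymm hKsub (fun μ hμ => h μ hμ))
  -- cover K by balls of radius d ν μ / 2 around its points
  have hpos : ∀ ν ∈ K, 0 < d ν μ := by
    intro ν hν
    rcases lt_or_eq_of_le (d0 ν μ) with h | h
    · exact h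
    · exact absurd ((deq ν μ).mp h.symm ▸ hν) hμK
  have hopen : ∀ ν ∈ K, IsOpen {ρ | d ρ ν < d ν μ / 2} := by
    intro ν _
    rw [isOpen_iff_mem_nhds]
    intro σ hσ
    rw [dnhds]
    refine ⟨d ν μ / 2 - d σ ν, by simpa using hσ, fun ρ hρ => ?_⟩
    simp only [Set.mem_setOf_eq] at *
    have := dtri ρ σ ν
    linarith
  have hcover : K ⊆ ⋃ ν ∈ K, {ρ | d ρ ν < d ν μ / 2} := by
    intro ν hν
    refine Set.mem_biUnion hν ?_
    simp only [Set.mem_setOf_eq, (deq ν ν).mpr rfl]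
    linarith [hpos ν hν]
  obtain ⟨t, htK, htfin, htcov⟩ := hKc.elim_finite_subcover_image hopen hcover
  have htne : (htfin.toFinset).Nonempty := by
    obtain ⟨ν, hν⟩ := hKne
    have := htcov hν
    simp only [Set.mem_iUnion] at this
    obtain ⟨i, hi, _⟩ := this
    exact ⟨i, htfin.mem_toFinset.mpr hi⟩
  set ε : ℝ := htfin.toFinset.inf' htne (fun ν => d ν μ / 2) with hε
  have hεpos : 0 < ε := by
    rw [hε, Finset.lt_inf'_iff]
    intro ν hν
    have := hpos ν (htK (htfin.mem_toFinset.mp hν))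
    linarith
  have hKfar : ∀ ρ ∈ K, ¬ d ρ μ < ε := by
    intro ρ hρ hlt
    have := htcov hρ
    simp only [Set.mem_iUnion] at this
    obtain ⟨ν, hν, hρν⟩ := this
    have h1 : ε ≤ d ν μ / 2 := Finset.inf'_le _ (htfin.mem_toFinset.mpr hν)
    simp only [Set.mem_setOf_eq] at hρν
    have h2 := dtri ν ρ μ
    have h3 := dsymm ν ρ
    linarith
  refine lt_of_lt_of_le (hμO ε hεpos) (measure_mono ?_)
  rintro x ⟨hxB, ν, hνL, hνd⟩
  exact ⟨hxB, fun hsub => hKfar ν (hsub hνL) hνd⟩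
end
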